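/- Let Φ be a root system with simple roots Π and Weyl group longest element w₀, let ρ be the half-sum of positive roots, p a prime, r ≥ 1, and γ a dominant weight. If λ, μ are p^r-restricted dominant weights such that 2(p^r−1)ρ + w₀λ > 2(p^r−1)ρ + w₀μ + p^r γ in the dominance order, then μ >_ℚ λ in the rational order. -/

import Mathlib

/-!
Put `δ := w₀ lam - w₀ mu - p^r γ`, a nonzero nonnegative integer combination of simple roots.
Applying `-w₀`, which permutes the simple roots, gives `mu - lam = -w₀ δ + p^r (-w₀ γ)`.
Here `-w₀ δ` is again a nonnegative combination of simple roots, and so is the dominant weight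
`-w₀ γ`, because a dominant weight has nonnegative coordinates in the base (the negative part
`ν⁻` of its coordinates satisfies `B ν⁻ ν⁻ ≤ 0` since distinct simple roots are obtuse).
Finally `mu ≠ lam`: otherwise `δ = -p^r γ` would be a nonnegative combination of simple roots
pairing nonpositively with each of them, so `B δ δ ≤ 0` and `δ = 0`.
-/

section CommRing

variable {K V : Type*} [CommRing K] [AddCommGroup V] [Module K V] (B : V →ₗ[K] V →ₗ[K] K)
  {Δ : Finset V} {w : V →ₗ[K] V}

theorem apply_sum_smul_right (x : V) (f : V → K) :
    B x (∑ α ∈ Δ, f α • α) = ∑ α ∈ Δ, f α * B x α := by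
  simp only [map_sum, map_smul, smul_eq_mul]

theorem apply_sum_smul_left (f : V → K) (y : V) :
    B (∑ α ∈ Δ, f α • α) y = ∑ α ∈ Δ, f α * B α y := by
  simp only [map_sum, map_smul, LinearMap.sum_apply, LinearMap.smul_apply, smul_eq_mul]

theorem neg_map_sum_smul (hinv : ∀ v, w (w v) = v) (hperm : ∀ α ∈ Δ, -(w α) ∈ Δ) (f : V → K) :
    -(w (∑ α ∈ Δ, f α • α)) = ∑ β ∈ Δ, f (-(w β)) • β := by
  rw [map_sum, ← Finset.sum_neg_distrib]
  exact Finset.sum_nbij' (fun α => -(w α)) (fun β => -(w β)) hperm hperm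
    (fun α _ => by simp [hinv]) (fun β _ => by simp [hinv]) (fun α _ => by simp [hinv])

theorem apply_neg_map_nonneg [PartialOrder K] (hinv : ∀ v, w (w v) = v)
    (hperm : ∀ α ∈ Δ, -(w α) ∈ Δ) (horth : ∀ x y : V, B (w x) (w y) = B x y) {γ : V} (hγ : ∀ α ∈ Δ, 0 ≤ B γ α) :
    ∀ α ∈ Δ, 0 ≤ B (-(w γ)) α := by
  intro α hα
  rw [← horth, map_neg, hinv, map_neg, LinearMap.neg_apply, ← map_neg]
  exact hγ _ (hperm α hα)

end CommRing

section OrderedField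

variable {K V : Type*} [Field K] [LinearOrder K] [IsStrictOrderedRing K]
  [AddCommGroup V] [Module K V] (B : V →ₗ[K] V →ₗ[K] K) {Δ : Finset V}

theorem eq_zero_of_eq_sum_nonneg_smul_of_apply_nonpos
    (hposdef : ∀ x : V, x ≠ 0 → 0 < B x x) {ν : V} {c : V → K}
    (hc : ∀ α ∈ Δ, 0 ≤ c α) (hν : ∀ α ∈ Δ, B ν α ≤ 0) (hsum : ν = ∑ α ∈ Δ, c α • α) :
    ν = 0 := by
  have hBνν : B ν ν ≤ 0 := by
    nth_rewrite 2 [hsum]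
    rw [apply_sum_smul_right]
    exact Finset.sum_nonpos fun α hα => mul_nonpos_of_nonneg_of_nonpos (hc α hα) (hν α hα)
  by_contra hne
  exact (hposdef ν hne).not_ge hBνν

theorem apply_sum_smul_sum_smul_nonneg_of_obtuse
    (hobtuse : ∀ α ∈ Δ, ∀ β ∈ Δ, α ≠ β → B α β ≤ 0) {f g : V → K}
    (hf : ∀ α ∈ Δ, 0 ≤ f α) (hg : ∀ α ∈ Δ, g α ≤ 0) (hfg : ∀ α ∈ Δ, f α * g α = 0) :
    0 ≤ B (∑ α ∈ Δ, f α • α) (∑ β ∈ Δ, g β • β) := by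
  rw [apply_sum_smul_right]
  refine Finset.sum_nonneg fun β hβ => ?_
  rw [apply_sum_smul_left, Finset.mul_sum]
  refine Finset.sum_nonneg fun α hα => ?_
  rcases eq_or_ne α β with rfl | hne
  · rw [show g α * (f α * B α α) = f α * g α * B α α by ring, hfg α hα, zero_mul]
  · have := mul_nonneg_of_nonpos_of_nonpos (hg β hβ) (hobtuse α hα β hβ hne)
    nlinarith [mul_nonneg (hf α hα) this]

theorem exists_nonneg_sum_smul_of_apply_nonneg
    (hposdef : ∀ x : V, x ≠ 0 → 0 < B x x) (hspan : Submodule.span K (Δ : Set V) = ⊤)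
    (hobtuse : ∀ α ∈ Δ, ∀ β ∈ Δ, α ≠ β → B α β ≤ 0) {ν : V} (hν : ∀ α ∈ Δ, 0 ≤ B ν α) :
    ∃ q : V → K, (∀ α ∈ Δ, 0 ≤ q α) ∧ ν = ∑ α ∈ Δ, q α • α := by
  obtain ⟨f, -, hf⟩ := Submodule.mem_span_finset.mp (hspan ▸ Submodule.mem_top (x := ν))
  set νp := ∑ α ∈ Δ, max (f α) 0 • α
  set νm := ∑ α ∈ Δ, min (f α) 0 • α
  have hsplit : ν = νp + νm := by
    rw [← hf, ← Finset.sum_add_distrib]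
    exact Finset.sum_congr rfl fun α _ => by rw [← add_smul, add_comm, min_add_max, add_zero]
  have hνm : B ν νm ≤ 0 := by
    rw [apply_sum_smul_right]
    exact Finset.sum_nonpos fun α hα => mul_nonpos_of_nonpos_of_nonneg (min_le_right _ _) (hν α hα)
  have hνpνm : 0 ≤ B νp νm :=
    apply_sum_smul_sum_smul_nonneg_of_obtuse B hobtuse (fun _ _ => le_max_right _ _)
      (fun _ _ => min_le_right _ _) fun α _ => by
        rcases le_total (f α) 0 with h | h <;> simp [h]
  have hνmνm : B νm νm ≤ 0 := by
    rw [hsplit, map_add, LinearMap.add_apply] at hνm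
    linarith
  have hνm0 : νm = 0 := by
    by_contra hne
    exact (hposdef νm hne).not_ge hνmνm
  exact ⟨fun α => max (f α) 0, fun _ _ => le_max_right _ _, by rw [hsplit, hνm0, add_zero]⟩

end OrderedField

theorem stmt_3_general {V : Type*} [AddCommGroup V] [Module ℚ V]
    (B : V →ₗ[ℚ] V →ₗ[ℚ] ℚ)
    (hposdef : ∀ x : V, x ≠ 0 → 0 < B x x)
    (Δ : Finset V)
    (hspan : Submodule.span ℚ (Δ : Set V) = ⊤)
    (hobtuse : ∀ α ∈ Δ, ∀ β ∈ Δ, α ≠ β → B α β ≤ 0)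
    (w₀ : V →ₗ[ℚ] V)
    (hinv : ∀ v, w₀ (w₀ v) = v)
    (hperm : ∀ α ∈ Δ, -(w₀ α) ∈ Δ)
    (horth : ∀ x y : V, B (w₀ x) (w₀ y) = B x y)
    (ρ : V)
    (p r : ℕ)
    (γ : V) (hγ : ∀ α ∈ Δ, 0 ≤ B γ α)
    (lam mu : V)
    (hgt : ∃ c : V → ℕ,
      ((2 * ((p : ℚ) ^ r - 1)) • ρ + w₀ lam) -
        ((2 * ((p : ℚ) ^ r - 1)) • ρ + w₀ mu + ((p : ℚ) ^ r) • γ) = ∑ α ∈ Δ, (c α : ℚ) • α ∧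
      ((2 * ((p : ℚ) ^ r - 1)) • ρ + w₀ lam) ≠
        ((2 * ((p : ℚ) ^ r - 1)) • ρ + w₀ mu + ((p : ℚ) ^ r) • γ)) :
    ∃ q : V → ℚ, (∀ α ∈ Δ, 0 ≤ q α) ∧ mu - lam = ∑ α ∈ Δ, q α • α ∧ mu ≠ lam := by
  obtain ⟨c, hc, hne⟩ := hgt
  set P : ℚ := (p : ℚ) ^ r
  have hP : 0 ≤ P := by positivity
  have hδ : w₀ lam - w₀ mu - P • γ = ∑ α ∈ Δ, (c α : ℚ) • α := by rw [← hc]; abel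
  have hmu_ne : mu ≠ lam := by
    rintro rfl
    refine sub_ne_zero.mpr hne <| eq_zero_of_eq_sum_nonneg_smul_of_apply_nonpos B hposdef
      (fun _ _ => Nat.cast_nonneg _) (fun α hα => ?_) hc
    rw [show ∀ x y z : V, x + y - (x + y + z) = -z by intros; abel]
    simpa using mul_nonneg hP (hγ α hα)
  obtain ⟨q, hq, hqγ⟩ := exists_nonneg_sum_smul_of_apply_nonneg B hposdef hspan hobtuse
    (apply_neg_map_nonneg B hinv hperm horth hγ)
  have hdiff : mu - lam = -(w₀ (w₀ lam - w₀ mu - P • γ)) + P • -(w₀ γ) := by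
    simp only [map_sub, map_smul, hinv, smul_neg]; abel
  refine ⟨fun β => (c (-(w₀ β)) : ℚ) + P * q β,
    fun α hα => add_nonneg (Nat.cast_nonneg _) (mul_nonneg hP (hq α hα)), ?_, hmu_ne⟩
  rw [hdiff, hδ, neg_map_sum_smul hinv hperm, hqγ, Finset.smul_sum, ← Finset.sum_add_distrib]
  simp only [add_smul, smul_smul]

/-- Let `Δ` be a base of a root system in a rational vector space `V`
equipped with a positive-definite symmetric invariant form `B`; write
`⟨lam, α∨⟩ = 2 B lam α / B α α`.  Let `w₀` be the longest element of the Weyl group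
(an involutive isometry with `-w₀` permuting the simple roots), let `ρ` be the half-sum
of the positive roots, `p` a prime and `r ≥ 1`, and let `γ` be a dominant weight.  If
`lam, mu` are `p^r`-restricted dominant weights such that
`2(p^r-1)ρ + w₀ lam > 2(p^r-1)ρ + w₀ mu + p^r γ` in the dominance order (the difference
is a nonzero nonnegative integer combination of simple roots), then `mu >_ℚ lam` in the
rational order (`mu - lam` is a nonzero nonnegative rational combination of simple
roots). -/
theorem stmt_3 {V : Type*} [AddCommGroup V] [Module ℚ V]
    (B : V →ₗ[ℚ] V →ₗ[ℚ] ℚ)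
    (hsymm : ∀ x y : V, B x y = B y x)
    (hposdef : ∀ x : V, x ≠ 0 → 0 < B x x)
    (Δ : Finset V)
    (hindep : LinearIndependent ℚ (fun a : Δ => (a : V)))
    (hspan : Submodule.span ℚ (Δ : Set V) = ⊤)
    (hobtuse : ∀ α ∈ Δ, ∀ β ∈ Δ, α ≠ β → B α β ≤ 0)
    (w₀ : V →ₗ[ℚ] V)
    (hinv : ∀ v, w₀ (w₀ v) = v)
    (hperm : ∀ α ∈ Δ, -(w₀ α) ∈ Δ)
    (horth : ∀ x y : V, B (w₀ x) (w₀ y) = B x y)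
    (ρ : V)
    (hρ : ∀ α ∈ Δ, 2 * B ρ α = B α α)
    (p r : ℕ) (hp : p.Prime) (hr : 1 ≤ r)
    (γ : V) (hγ : ∀ α ∈ Δ, 0 ≤ B γ α)
    (lam mu : V)
    (hlam : ∀ α ∈ Δ, 0 ≤ 2 * B lam α / B α α ∧ 2 * B lam α / B α α < (p : ℚ) ^ r)
    (hmu : ∀ α ∈ Δ, 0 ≤ 2 * B mu α / B α α ∧ 2 * B mu α / B α α < (p : ℚ) ^ r)
    (hgt : ∃ c : V → ℕ,
      ((2 * ((p : ℚ) ^ r - 1)) • ρ + w₀ lam) -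
        ((2 * ((p : ℚ) ^ r - 1)) • ρ + w₀ mu + ((p : ℚ) ^ r) • γ) = ∑ α ∈ Δ, (c α : ℚ) • α ∧
      ((2 * ((p : ℚ) ^ r - 1)) • ρ + w₀ lam) ≠
        ((2 * ((p : ℚ) ^ r - 1)) • ρ + w₀ mu + ((p : ℚ) ^ r) • γ)) :
    ∃ q : V → ℚ, (∀ α ∈ Δ, 0 ≤ q α) ∧ mu - lam = ∑ α ∈ Δ, q α • α ∧ mu ≠ lam :=
  stmt_3_general B hposdef Δ hspan hobtuse w₀ hinv hperm horth ρ p r γ hγ lam mu hgt
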